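/- Let φ be a sentence of SCL or of BndSCL that is determined everywhere, i.e. in every suitable model exactly one of Eloise and Abelard has a winning strategy in the semantic game for φ (equivalently, φ ∨ ¬φ is valid in the respective semantics). Then there exists n ∈ ℕ such that φ is equivalent to its n-th approximant Φⁿ_φ: for every suitable model 𝔄, φ is true in 𝔄 (in the respective semantics) if and only if 𝔄 ⊨ Φⁿ_φ in first-order logic. In particular φ is equivalent to a first-order sentence. -/

import Mathlib

/-
Common formalization of the logics SCL (static computation logic, unbounded
game-theoretic semantics) and BndSCL (bounded semantics), following the paper
"First-order logic with self-reference".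

* Games are played on arbitrary (possibly infinite) arenas; plays are maximal
  walks; strategies are functions from finite walks (histories) to positions;
  infinite plays, and finite plays ending at a dead end where `win` holds for
  neither player, are won by nobody.
* The semantic games are formalized with positions carrying the current
  (sub)formula, an environment binding each label symbol to the labelled
  formula it most recently named (this is the standard closure rendering of
  "reference formula of a claim-symbol occurrence"), the current assignment
  and the polarity (+ = true, − = false).  The bounded game additionally
  carries a clock value.
-/

set_option autoImplicit false

universe u

/-! ## Generic two-player games on (possibly infinite) arenas -/

inductive Player : Type
  | eloise : Player
  | abelard : Player
deriving DecidableEq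

def Player.opp : Player → Player
  | .eloise => .abelard
  | .abelard => .eloise

/-- A game arena: an ownership function (corresponding to the partition
`V = V₀ ∪ V₁`), an edge relation, and a predicate telling which player (if
any) wins a play ending at a given dead-end position. -/
structure GameArena (P : Type u) where
  turn : P → Player
  edge : P → P → Prop
  win : P → Player → Prop

namespace GameArena

variable {P : Type u} (A : GameArena P)

def DeadEnd (u : P) : Prop := ∀ x, ¬ A.edge u x

/-- `w` is a finite nonempty walk whose first element is `v`. -/
def IsWalkFrom (v : P) (w : List P) : Prop :=
  w.head? = some v ∧ List.Chain' A.edge w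

/-- A finite (maximal) play from `v`: a walk whose last element is a dead end. -/
def IsFinitePlay (v : P) (w : List P) : Prop :=
  A.IsWalkFrom v w ∧ ∀ u, w.getLast? = some u → A.DeadEnd u

/-- An infinite play from `v`. -/
def IsInfPlay (v : P) (f : ℕ → P) : Prop :=
  f 0 = v ∧ ∀ n, A.edge (f n) (f (n + 1))

/-- A strategy (a function from histories to positions) of player `pl` is
legal if it always prescribes a move along an edge whenever a move exists. -/
def LegalFor (pl : Player) (v : P) (σ : List P → P) : Prop :=
  ∀ w u, A.IsWalkFrom v w → w.getLast? = some u → A.turn u = pl →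
    (∃ x, A.edge u x) → A.edge u (σ w)

/-- The strategy `σ` of player `pl` is followed in the finite play `w`. -/
def FollowsFin (pl : Player) (σ : List P → P) (w : List P) : Prop :=
  ∀ q u x, (q ++ [x]) <+: w → q.getLast? = some u → A.turn u = pl → x = σ q

/-- The strategy `σ` of player `pl` is followed in the infinite play `f`. -/
def FollowsInf (pl : Player) (σ : List P → P) (f : ℕ → P) : Prop :=
  ∀ n, A.turn (f n) = pl →
    f (n + 1) = σ (List.ofFn fun i : Fin (n + 1) => f i)

/-- `σ` is a winning strategy of player `pl` from `v`: it is legal, every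
finite maximal play following it ends in a dead end won by `pl`, and no
infinite play follows it (infinite plays are won by neither player). -/
def WinningStrategy (pl : Player) (v : P) (σ : List P → P) : Prop :=
  A.LegalFor pl v σ ∧
  (∀ w, A.IsFinitePlay v w → A.FollowsFin pl σ w →
      ∃ u, w.getLast? = some u ∧ A.win u pl) ∧
  (∀ f, A.IsInfPlay v f → ¬ A.FollowsInf pl σ f)

def HasWinningStrategy (pl : Player) (v : P) : Prop :=
  ∃ σ : List P → P, A.WinningStrategy pl v σ

end GameArena

/-- A positional strategy: its moves depend only on the current position. -/
def Positional {P : Type u} (σ : List P → P) : Prop :=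
  ∀ q q' : List P, q.getLast? = q'.getLast? → σ q = σ q'

/-! ## Syntax of SCL / BndSCL -/

/-- A purely relational vocabulary. -/
structure Vocab : Type 1 where
  Rel : Type
  arity : Rel → ℕ

/-- Formulas of SCL / BndSCL over the vocabulary `V`.  Variables and label
symbols are natural numbers; `claim L` is the claim symbol `C_L` and
`lab L φ` is the labelled formula `L φ`. -/
inductive SCLFormula (V : Vocab) : Type
  | bot : SCLFormula V
  | eq (x y : ℕ) : SCLFormula V
  | rel (R : V.Rel) (args : Fin (V.arity R) → ℕ) : SCLFormula V
  | claim (L : ℕ) : SCLFormula V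
  | not (φ : SCLFormula V) : SCLFormula V
  | and (φ ψ : SCLFormula V) : SCLFormula V
  | or (φ ψ : SCLFormula V) : SCLFormula V
  | ex (x : ℕ) (φ : SCLFormula V) : SCLFormula V
  | all (x : ℕ) (φ : SCLFormula V) : SCLFormula V
  | lab (L : ℕ) (φ : SCLFormula V) : SCLFormula V

namespace SCLFormula

variable {V : Vocab}

/-- First-order atoms. -/
def IsFOAtom : SCLFormula V → Prop
  | .bot => True
  | .eq _ _ => True
  | .rel _ _ => True
  | _ => False

/-- Purely first-order formulas (no claim symbols, no label symbols). -/
def IsFO : SCLFormula V → Prop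
  | .bot => True
  | .eq _ _ => True
  | .rel _ _ => True
  | .claim _ => False
  | .not φ => IsFO φ
  | .and φ ψ => IsFO φ ∧ IsFO ψ
  | .or φ ψ => IsFO φ ∧ IsFO ψ
  | .ex _ φ => IsFO φ
  | .all _ φ => IsFO φ
  | .lab _ _ => False

/-- Free (individual) variables. -/
def freeVars : SCLFormula V → Finset ℕ
  | .bot => ∅
  | .eq x y => {x, y}
  | .rel _ a => Finset.image a Finset.univ
  | .claim _ => ∅
  | .not φ => freeVars φ
  | .and φ ψ => freeVars φ ∪ freeVars ψ
  | .or φ ψ => freeVars φ ∪ freeVars ψ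
  | .ex x φ => freeVars φ \ {x}
  | .all x φ => freeVars φ \ {x}
  | .lab _ φ => freeVars φ

/-- All variables occurring in a formula (free or bound). -/
def vars : SCLFormula V → Finset ℕ
  | .bot => ∅
  | .eq x y => {x, y}
  | .rel _ a => Finset.image a Finset.univ
  | .claim _ => ∅
  | .not φ => vars φ
  | .and φ ψ => vars φ ∪ vars ψ
  | .or φ ψ => vars φ ∪ vars ψ
  | .ex x φ => insert x (vars φ)
  | .all x φ => insert x (vars φ)
  | .lab _ φ => vars φ

/-- Sentences: formulas with no free variables. -/
def IsSentence (φ : SCLFormula V) : Prop := freeVars φ = ∅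

end SCLFormula

/-! ## Structures and first-order (Tarski) satisfaction -/

/-- A (suitable) model for vocabulary `V`: a nonempty domain together with an
interpretation of all relation symbols. -/
structure Struct (V : Vocab) where
  Dom : Type u
  dom_nonempty : Nonempty Dom
  interp : ∀ R : V.Rel, (Fin (V.arity R) → Dom) → Prop

attribute [instance] Struct.dom_nonempty

/-- Satisfaction of atoms (false on non-atoms). -/
def atomSat {V : Vocab} (M : Struct.{u} V) (s : ℕ → M.Dom) : SCLFormula V → Prop
  | .bot => False
  | .eq x y => s x = s y
  | .rel R a => M.interp R fun i => s (a i)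
  | _ => False

/-- Standard (Tarski) first-order satisfaction.  It is only meaningful on
purely first-order formulas; claim symbols are interpreted as `False` and
label symbols are ignored. -/
def FOSat {V : Vocab} (M : Struct.{u} V) : (ℕ → M.Dom) → SCLFormula V → Prop
  | _, .bot => False
  | s, .eq x y => s x = s y
  | s, .rel R a => M.interp R fun i => s (a i)
  | _, .claim _ => False
  | s, .not φ => ¬ FOSat M s φ
  | s, .and φ ψ => FOSat M s φ ∧ FOSat M s ψ
  | s, .or φ ψ => FOSat M s φ ∨ FOSat M s ψ
  | s, .ex x φ => ∃ a : M.Dom, FOSat M (Function.update s x a) φ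
  | s, .all x φ => ∀ a : M.Dom, FOSat M (Function.update s x a) φ
  | s, .lab _ φ => FOSat M s φ

/-! ## The evaluation games -/

/-- A position of the semantic game: the current formula, the environment
recording for each label symbol `L` the reference formula `L ψ` it currently
names, the current assignment, and the polarity (`true` = `+`). -/
structure SCLPos (V : Vocab) (D : Type u) : Type u where
  form : SCLFormula V
  env : ℕ → Option (SCLFormula V)
  asg : ℕ → D
  pol : Bool

/-- Which player moves at a given position. (At positions with at most one
successor the owner is irrelevant; we let Eloise own them.) -/
def posTurn {V : Vocab} {D : Type u} (p : SCLPos V D) : Player :=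
  match p.form, p.pol with
  | .and _ _, true => .abelard
  | .and _ _, false => .eloise
  | .or _ _, true => .eloise
  | .or _ _, false => .abelard
  | .all _ _, true => .abelard
  | .all _ _, false => .eloise
  | .ex _ _, true => .eloise
  | .ex _ _, false => .abelard
  | _, _ => .eloise

/-- Who wins a play ending at a given position: at an FO-atom position,
Eloise wins iff the atom's truth value agrees with the polarity, and Abelard
wins otherwise; plays ending anywhere else (e.g. at a claim symbol with no
reference formula, or with clock value 0) are won by neither player. -/
def posWin {V : Vocab} (M : Struct.{u} V) (p : SCLPos V M.Dom) : Player → Prop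
  | .eloise => p.form.IsFOAtom ∧ (atomSat M p.asg p.form ↔ p.pol = true)
  | .abelard => p.form.IsFOAtom ∧ ¬ (atomSat M p.asg p.form ↔ p.pol = true)

/-- Moves of the unbounded evaluation game `G_∞`. -/
inductive UStep {V : Vocab} (M : Struct.{u} V) :
    SCLPos V M.Dom → SCLPos V M.Dom → Prop
  | neg (φ : SCLFormula V) (e : ℕ → Option (SCLFormula V)) (s : ℕ → M.Dom) (b : Bool) :
      UStep M ⟨.not φ, e, s, b⟩ ⟨φ, e, s, !b⟩
  | andLeft (φ ψ : SCLFormula V) (e : ℕ → Option (SCLFormula V)) (s : ℕ → M.Dom) (b : Bool) :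
      UStep M ⟨.and φ ψ, e, s, b⟩ ⟨φ, e, s, b⟩
  | andRight (φ ψ : SCLFormula V) (e : ℕ → Option (SCLFormula V)) (s : ℕ → M.Dom) (b : Bool) :
      UStep M ⟨.and φ ψ, e, s, b⟩ ⟨ψ, e, s, b⟩
  | orLeft (φ ψ : SCLFormula V) (e : ℕ → Option (SCLFormula V)) (s : ℕ → M.Dom) (b : Bool) :
      UStep M ⟨.or φ ψ, e, s, b⟩ ⟨φ, e, s, b⟩
  | orRight (φ ψ : SCLFormula V) (e : ℕ → Option (SCLFormula V)) (s : ℕ → M.Dom) (b : Bool) :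
      UStep M ⟨.or φ ψ, e, s, b⟩ ⟨ψ, e, s, b⟩
  | exStep (x : ℕ) (φ : SCLFormula V) (e : ℕ → Option (SCLFormula V)) (s : ℕ → M.Dom)
      (b : Bool) (a : M.Dom) :
      UStep M ⟨.ex x φ, e, s, b⟩ ⟨φ, e, Function.update s x a, b⟩
  | allStep (x : ℕ) (φ : SCLFormula V) (e : ℕ → Option (SCLFormula V)) (s : ℕ → M.Dom)
      (b : Bool) (a : M.Dom) :
      UStep M ⟨.all x φ, e, s, b⟩ ⟨φ, e, Function.update s x a, b⟩
  | labStep (L : ℕ) (φ : SCLFormula V) (e : ℕ → Option (SCLFormula V)) (s : ℕ → M.Dom)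
      (b : Bool) :
      UStep M ⟨.lab L φ, e, s, b⟩ ⟨φ, Function.update e L (some (.lab L φ)), s, b⟩
  | claimStep (L : ℕ) (e : ℕ → Option (SCLFormula V)) (s : ℕ → M.Dom) (b : Bool)
      (χ : SCLFormula V) (h : e L = some χ) :
      UStep M ⟨.claim L, e, s, b⟩ ⟨χ, e, s, b⟩

/-- Moves of the `n`-bounded evaluation game: positions additionally carry a
clock value, which decreases by one exactly at jumps from a claim symbol to
its reference formula; a claim-symbol position with clock value `0` is a dead
end won by neither player. -/
inductive BStep {V : Vocab} (M : Struct.{u} V) :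
    SCLPos V M.Dom × ℕ → SCLPos V M.Dom × ℕ → Prop
  | neg (φ : SCLFormula V) (e : ℕ → Option (SCLFormula V)) (s : ℕ → M.Dom) (b : Bool) (n : ℕ) :
      BStep M (⟨.not φ, e, s, b⟩, n) (⟨φ, e, s, !b⟩, n)
  | andLeft (φ ψ : SCLFormula V) (e : ℕ → Option (SCLFormula V)) (s : ℕ → M.Dom) (b : Bool)
      (n : ℕ) : BStep M (⟨.and φ ψ, e, s, b⟩, n) (⟨φ, e, s, b⟩, n)
  | andRight (φ ψ : SCLFormula V) (e : ℕ → Option (SCLFormula V)) (s : ℕ → M.Dom) (b : Bool)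
      (n : ℕ) : BStep M (⟨.and φ ψ, e, s, b⟩, n) (⟨ψ, e, s, b⟩, n)
  | orLeft (φ ψ : SCLFormula V) (e : ℕ → Option (SCLFormula V)) (s : ℕ → M.Dom) (b : Bool)
      (n : ℕ) : BStep M (⟨.or φ ψ, e, s, b⟩, n) (⟨φ, e, s, b⟩, n)
  | orRight (φ ψ : SCLFormula V) (e : ℕ → Option (SCLFormula V)) (s : ℕ → M.Dom) (b : Bool)
      (n : ℕ) : BStep M (⟨.or φ ψ, e, s, b⟩, n) (⟨ψ, e, s, b⟩, n)
  | exStep (x : ℕ) (φ : SCLFormula V) (e : ℕ → Option (SCLFormula V)) (s : ℕ → M.Dom)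
      (b : Bool) (n : ℕ) (a : M.Dom) :
      BStep M (⟨.ex x φ, e, s, b⟩, n) (⟨φ, e, Function.update s x a, b⟩, n)
  | allStep (x : ℕ) (φ : SCLFormula V) (e : ℕ → Option (SCLFormula V)) (s : ℕ → M.Dom)
      (b : Bool) (n : ℕ) (a : M.Dom) :
      BStep M (⟨.all x φ, e, s, b⟩, n) (⟨φ, e, Function.update s x a, b⟩, n)
  | labStep (L : ℕ) (φ : SCLFormula V) (e : ℕ → Option (SCLFormula V)) (s : ℕ → M.Dom)
      (b : Bool) (n : ℕ) :
      BStep M (⟨.lab L φ, e, s, b⟩, n) (⟨φ, Function.update e L (some (.lab L φ)), s, b⟩, n)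
  | claimStep (L : ℕ) (e : ℕ → Option (SCLFormula V)) (s : ℕ → M.Dom) (b : Bool)
      (χ : SCLFormula V) (n : ℕ) (h : e L = some χ) :
      BStep M (⟨.claim L, e, s, b⟩, n + 1) (⟨χ, e, s, b⟩, n)

/-- The unbounded evaluation game `G_∞(𝔄, ·, ·)` as a game arena. -/
def gameU {V : Vocab} (M : Struct.{u} V) : GameArena (SCLPos V M.Dom) where
  turn := posTurn
  edge := UStep M
  win := posWin M

/-- The bounded evaluation games `G_n(𝔄, ·, ·)` (for all clock values `n`
simultaneously) as a game arena. -/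
def gameB {V : Vocab} (M : Struct.{u} V) : GameArena (SCLPos V M.Dom × ℕ) where
  turn p := posTurn p.1
  edge := BStep M
  win p := posWin M p.1

/-- The initial position of the evaluation game for `φ` under assignment `s`:
empty environment and positive polarity. -/
def initPos {V : Vocab} {D : Type u} (φ : SCLFormula V) (s : ℕ → D) : SCLPos V D :=
  ⟨φ, fun _ => none, s, true⟩

/-- Truth under the unbounded semantics (the logic SCL):
`𝔄,s ⊨ φ` iff Eloise has a winning strategy in `G_∞(𝔄,s,φ)`. -/
def SCLTrue {V : Vocab} (M : Struct.{u} V) (s : ℕ → M.Dom) (φ : SCLFormula V) : Prop :=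
  (gameU M).HasWinningStrategy .eloise (initPos φ s)

/-! ### The bounded game `G_ω` -/

/-- Positions of the game `G_ω`: the initial position (where Abelard picks a
number `n'`), the intermediate positions (where Eloise picks some `n ≥ n'`),
and the positions of the `n`-bounded games. -/
inductive GOPos (V : Vocab) (D : Type u) : Type u
  | start : GOPos V D
  | mid (n' : ℕ) : GOPos V D
  | inner (p : SCLPos V D) (clock : ℕ) : GOPos V D

inductive GOStep {V : Vocab} (M : Struct.{u} V) (φ : SCLFormula V) (s : ℕ → M.Dom) :
    GOPos V M.Dom → GOPos V M.Dom → Prop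
  | abelardPick (n' : ℕ) : GOStep M φ s .start (.mid n')
  | eloisePick (n' n : ℕ) (h : n' ≤ n) : GOStep M φ s (.mid n') (.inner (initPos φ s) n)
  | play (p q : SCLPos V M.Dom) (m k : ℕ) (h : BStep M (p, m) (q, k)) :
      GOStep M φ s (.inner p m) (.inner q k)

def goTurn {V : Vocab} {D : Type u} : GOPos V D → Player
  | .start => .abelard
  | .mid _ => .eloise
  | .inner p _ => posTurn p

def goWin {V : Vocab} (M : Struct.{u} V) : GOPos V M.Dom → Player → Prop
  | .inner p _, pl => posWin M p pl
  | _, _ => False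

/-- The bounded evaluation game `G_ω(𝔄,s,φ)`: Abelard picks `n' ∈ ℕ`, then
Eloise picks `n ≥ n'`, and then `G_n(𝔄,s,φ)` is played. -/
def gameOmega {V : Vocab} (M : Struct.{u} V) (φ : SCLFormula V) (s : ℕ → M.Dom) :
    GameArena (GOPos V M.Dom) where
  turn := goTurn
  edge := GOStep M φ s
  win := goWin M

/-- Truth under the bounded semantics (the logic BndSCL):
`𝔄,s ⊨_ω φ` iff Eloise has a winning strategy in `G_ω(𝔄,s,φ)`. -/
def BndTrue {V : Vocab} (M : Struct.{u} V) (s : ℕ → M.Dom) (φ : SCLFormula V) : Prop :=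
  (gameOmega M φ s).HasWinningStrategy .eloise .start

/-! ## Approximants -/

/-- Auxiliary structural recursion for approximants: `k` tells what to put in
place of a claim symbol.  Label symbols are deleted (while updating the
environment), and polarity is tracked through negations. -/
def approxCore {V : Vocab}
    (k : (ℕ → Option (SCLFormula V)) → Bool → ℕ → SCLFormula V) :
    (ℕ → Option (SCLFormula V)) → Bool → SCLFormula V → SCLFormula V
  | _, _, .bot => .bot
  | _, _, .eq x y => .eq x y
  | _, _, .rel R a => .rel R a
  | e, b, .claim L => k e b L
  | e, b, .not φ => .not (approxCore k e (!b) φ)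
  | e, b, .and φ ψ => .and (approxCore k e b φ) (approxCore k e b ψ)
  | e, b, .or φ ψ => .or (approxCore k e b φ) (approxCore k e b ψ)
  | e, b, .ex x φ => .ex x (approxCore k e b φ)
  | e, b, .all x φ => .all x (approxCore k e b φ)
  | e, b, .lab L φ => approxCore k (Function.update e L (some (.lab L φ))) b φ

/-- `approx n e b φ` unfolds each claim symbol of `φ` (in environment `e`,
under polarity `b`) through `n` jumps to reference formulas; claim symbols
reached with exhausted budget (or with no reference formula) are replaced by
`⊥` at positive occurrences and `⊤` (i.e. `¬⊥`) at negative occurrences, and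
all label symbols are deleted. -/
def approx {V : Vocab} : ℕ → (ℕ → Option (SCLFormula V)) → Bool → SCLFormula V → SCLFormula V
  | 0 => approxCore fun _ b _ => if b then .bot else .not .bot
  | n + 1 => approxCore fun e b L =>
      match e L with
      | some χ => approx n e b χ
      | none => if b then .bot else .not .bot

/-- The `n`-th approximant `Φⁿ_φ` of `φ`: the first-order formula obtained
from the `n`-th unfolding of `φ` by deleting all label symbols and replacing
positive claim occurrences by `⊥` and negative ones by `⊤`. -/
def approximant {V : Vocab} (φ : SCLFormula V) (n : ℕ) : SCLFormula V :=
  approx n (fun _ => none) true φ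

/-!
The approximant `Φⁿ_φ`, read at a position of the semantic game, computes whether a player wins
the `n`-bounded game from there (`BoundedWin`), since it satisfies the one-step recursion of that
game. Hence if some approximant holds for a player, she wins `G_∞` and `G_ω`, ranking positions by
the least sufficient clock value and then by formula size. If none holds for her, her opponent
keeps her from winning `G_ω`, and also `G_∞` when the model is countably saturated: at a
quantifier position saturation provides one element that is bad for her at every clock value.

If `φ` were equivalent to none of its approximants, then for every `n` some model satisfies `φ`
but not `Φⁿ_φ`, nor (by determinacy) any approximant for Abelard. Since approximants increase with
`n`, an ultraproduct of these models along a nonprincipal ultrafilter is a countably saturated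
model in which no approximant holds for either player; there neither player wins, contradicting
determinacy.
-/

lemma List.getLastD_ofFn {α : Type u} (f : ℕ → α) (n : ℕ) (d : α) :
    (List.ofFn fun i : Fin (n + 1) => f i).getLastD d = f n := by
  rw [List.ofFn_succ_last, List.getLastD_concat]
  rfl

lemma Function.update_apply_family {β : ℕ → Type*} (s : ℕ → ∀ i, β i) (x : ℕ) (g : ∀ i, β i)
    (i : ℕ) : (fun v => Function.update s x g v i) = Function.update (fun v => s v i) x (g i) := by
  funext v
  by_cases hv : v = x <;> simp [hv]

lemma Set.Finite.exists_forall_of_antitone {α : Type*} {S : Set α} (hS : S.Finite)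
    {P : α → ℕ → Prop} (hP : ∀ q n m, n ≤ m → P q m → P q n) (h : ∀ n, ∃ q ∈ S, P q n) :
    ∃ q ∈ S, ∀ n, P q n := by
  by_contra! hc
  choose N hN using hc
  have hev : ∀ᶠ n in Filter.atTop, ∀ q ∈ S, ¬ P q n :=
    (Filter.eventually_all_finite hS).2 fun q hq =>
      (Filter.eventually_ge_atTop (N q hq)).mono fun n hn hPn => hN q hq (hP q _ _ hn hPn)
  obtain ⟨n, hn⟩ := hev.exists
  obtain ⟨q, hq, hPq⟩ := h n
  exact hn q hq hPq

/-! ## Winning regions and traps -/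

namespace GameArena

variable {P : Type u} {A : GameArena P} {pl : Player} {σ : List P → P} {v x : P} {w : List P}

lemma IsWalkFrom.ne_nil (h : A.IsWalkFrom v w) : w ≠ [] := by
  rintro rfl
  simp [IsWalkFrom] at h

lemma isWalkFrom_singleton (v : P) : A.IsWalkFrom v [v] := ⟨rfl, List.isChain_singleton v⟩

lemma IsWalkFrom.getLast?_eq (h : A.IsWalkFrom v w) : w.getLast? = some (w.getLastD v) := by
  simp [List.getLastD_eq_getLast?, List.getLast?_eq_some_getLast h.ne_nil]

lemma IsWalkFrom.snoc (h : A.IsWalkFrom v w) (hx : A.edge (w.getLastD v) x) :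
    A.IsWalkFrom v (w ++ [x]) := by
  obtain ⟨u, w, rfl⟩ := List.exists_cons_of_ne_nil h.ne_nil
  refine ⟨by simpa using h.1, List.isChain_append.2 ⟨h.2, List.isChain_singleton x, ?_⟩⟩
  intro a ha b hb
  simp_all [List.getLastD_eq_getLast?]

lemma IsWalkFrom.of_snoc (h : A.IsWalkFrom v (w ++ [x])) (hw : w ≠ []) :
    A.IsWalkFrom v w ∧ A.edge (w.getLastD v) x := by
  obtain ⟨u, w, rfl⟩ := List.exists_cons_of_ne_nil hw
  obtain ⟨h1, h2⟩ := h
  replace h2 := List.isChain_append.1 h2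
  refine ⟨⟨by simpa using h1, h2.1⟩, h2.2.2 _ ?_ x rfl⟩
  simp [List.getLastD_eq_getLast?, List.getLast?_cons]

lemma followsFin_singleton (x : P) : A.FollowsFin pl σ [x] := by
  intro q u y hq hu _
  obtain rfl : q = [] := by simpa using hq.length_le
  simp at hu

lemma FollowsFin.snoc (h : A.FollowsFin pl σ w)
    (hx : ∀ u, w.getLast? = some u → A.turn u = pl → x = σ w) : A.FollowsFin pl σ (w ++ [x]) := by
  intro q u y hq hu ht
  rcases List.prefix_concat_iff.1 hq with heq | hq
  · obtain ⟨rfl, hyx⟩ := List.append_inj' heq rfl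
    obtain rfl : y = x := by simpa using hyx
    exact hx u hu ht
  · exact h q u y hq hu ht

lemma FollowsFin.of_snoc (h : A.FollowsFin pl σ (w ++ [x])) : A.FollowsFin pl σ w :=
  fun q u y hq => h q u y (hq.trans (List.prefix_append w [x]))

section WinningRegion

variable {α : Type} [Preorder α] {W : P → Prop} {ρ : P → α}

variable (A W ρ) in
open Classical in
noncomputable def rankedMove (u : P) : P :=
  if h : ∃ q, A.edge u q ∧ W q ∧ ρ q < ρ u then h.choose
  else if h' : ∃ q, A.edge u q then h'.choose else u

lemma rankedMove_spec {u : P} (h : ∃ q, A.edge u q ∧ W q ∧ ρ q < ρ u) :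
    A.edge u (A.rankedMove W ρ u) ∧ W (A.rankedMove W ρ u) ∧ ρ (A.rankedMove W ρ u) < ρ u := by
  rw [rankedMove, dif_pos h]
  exact h.choose_spec

lemma edge_rankedMove {u : P} (h : ∃ q, A.edge u q) : A.edge u (A.rankedMove W ρ u) := by
  by_cases h' : ∃ q, A.edge u q ∧ W q ∧ ρ q < ρ u
  · exact (rankedMove_spec h').1
  · rw [rankedMove, dif_neg h', dif_pos h]
    exact h.choose_spec

lemma rankedMove_mem_region {p q : P}
    (hpl : ∀ p, W p → A.turn p = pl → ¬ A.DeadEnd p → ∃ q, A.edge p q ∧ W q ∧ ρ q < ρ p)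
    (hp : W p) (ht : A.turn p = pl) (hq : A.edge p q) :
    W (A.rankedMove W ρ p) ∧ ρ (A.rankedMove W ρ p) < ρ p :=
  (rankedMove_spec (hpl p hp ht fun h => h q hq)).2

lemma mem_region_of_followsFin (h0 : W v)
    (hpl : ∀ p, W p → A.turn p = pl → ¬ A.DeadEnd p → ∃ q, A.edge p q ∧ W q ∧ ρ q < ρ p)
    (hopp : ∀ p, W p → A.turn p ≠ pl → ∀ q, A.edge p q → W q ∧ ρ q < ρ p)
    (hw : A.IsWalkFrom v w) (hf : A.FollowsFin pl (fun w => A.rankedMove W ρ (w.getLastD v)) w) :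
    W (w.getLastD v) := by
  induction w using List.reverseRecOn with
  | nil => exact absurd rfl hw.ne_nil
  | append_singleton w x ih =>
    rw [List.getLastD_concat]
    rcases eq_or_ne w [] with rfl | hne
    · obtain rfl : x = v := by simpa [IsWalkFrom] using hw.1
      exact h0
    obtain ⟨hw, hx⟩ := hw.of_snoc hne
    have hu := ih hw hf.of_snoc
    by_cases ht : A.turn (w.getLastD v) = pl
    · rw [hf w _ x (List.prefix_refl _) hw.getLast?_eq ht]
      exact (rankedMove_mem_region hpl hu ht hx).1
    · exact (hopp _ hu ht x hx).1

theorem hasWinningStrategy_of_region [WellFoundedLT α] (h0 : W v)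
    (hdead : ∀ p, W p → A.DeadEnd p → A.win p pl)
    (hpl : ∀ p, W p → A.turn p = pl → ¬ A.DeadEnd p → ∃ q, A.edge p q ∧ W q ∧ ρ q < ρ p)
    (hopp : ∀ p, W p → A.turn p ≠ pl → ∀ q, A.edge p q → W q ∧ ρ q < ρ p) :
    A.HasWinningStrategy pl v := by
  refine ⟨fun w => A.rankedMove W ρ (w.getLastD v), fun w u hw hu _ hex => ?_,
    fun w hw hf => ?_, fun f hf hfσ => ?_⟩
  · dsimp only
    rw [show w.getLastD v = u by simp [List.getLastD_eq_getLast?, hu]]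
    exact edge_rankedMove hex
  · have hwalk : A.IsWalkFrom v w := hw.1
    exact ⟨_, hwalk.getLast?_eq,
      hdead _ (mem_region_of_followsFin h0 hpl hopp hwalk hf) (hw.2 _ hwalk.getLast?_eq)⟩
  · have hsucc : ∀ n, W (f n) → W (f (n + 1)) ∧ ρ (f (n + 1)) < ρ (f n) := by
      intro n hn
      by_cases ht : A.turn (f n) = pl
      · rw [hfσ n ht]
        dsimp only
        rw [List.getLastD_ofFn]
        exact rankedMove_mem_region hpl hn ht (hf.2 n)
      · exact hopp _ hn ht _ (hf.2 n)
    have hWf : ∀ n, W (f n) := fun n => by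
      induction n with
      | zero => exact hf.1 ▸ h0
      | succ n ih => exact (hsucc n ih).1
    exact (wellFounded_iff_isEmpty_descending_chain.1 wellFounded_lt).elim
      ⟨fun n => ρ (f n), fun n => (hsucc n (hWf n)).2⟩

end WinningRegion

section Trap

variable {R : P → Prop}

variable (A pl σ v R) in
open Classical in
noncomputable def trapHist : ℕ → List P
  | 0 => [v]
  | n + 1 =>
    let w := trapHist n
    let u := w.getLastD v
    if A.DeadEnd u then w
    else w ++ [if A.turn u = pl then σ w else if h : ∃ q, A.edge u q ∧ R q then h.choose else u]

lemma trapHist_spec (hσ : A.LegalFor pl v σ) (h0 : R v)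
    (hpl : ∀ p, R p → A.turn p = pl → ∀ q, A.edge p q → R q)
    (hopp : ∀ p, R p → A.turn p ≠ pl → ¬ A.DeadEnd p → ∃ q, A.edge p q ∧ R q) (n : ℕ) :
    A.IsWalkFrom v (A.trapHist pl σ v R n) ∧ A.FollowsFin pl σ (A.trapHist pl σ v R n) ∧
      R ((A.trapHist pl σ v R n).getLastD v) := by
  induction n with
  | zero => exact ⟨isWalkFrom_singleton v, followsFin_singleton v, h0⟩
  | succ n ih =>
    obtain ⟨hw, hf, hR⟩ := ih
    set w := A.trapHist pl σ v R n
    set u := w.getLastD v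
    rw [trapHist]
    split_ifs with hd ht hq
    · exact ⟨hw, hf, hR⟩
    · have hx : A.edge u (σ w) := hσ w u hw hw.getLast?_eq ht (not_forall_not.mp hd)
      refine ⟨hw.snoc hx, hf.snoc fun _ _ _ => rfl, ?_⟩
      simpa using hpl u hR ht _ hx
    · refine ⟨hw.snoc hq.choose_spec.1, hf.snoc fun u' hu' ht' => ?_,
        by simpa using hq.choose_spec.2⟩
      exact absurd (by simpa [hw.getLast?_eq] using hu' ▸ ht') ht
    · exact absurd (hopp u hR ht hd) hq

theorem not_hasWinningStrategy_of_trap (h0 : R v)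
    (hdead : ∀ p, R p → A.DeadEnd p → ¬ A.win p pl)
    (hpl : ∀ p, R p → A.turn p = pl → ∀ q, A.edge p q → R q)
    (hopp : ∀ p, R p → A.turn p ≠ pl → ¬ A.DeadEnd p → ∃ q, A.edge p q ∧ R q) :
    ¬ A.HasWinningStrategy pl v := by
  rintro ⟨σ, hσ, hfin, hinf⟩
  have hspec := trapHist_spec hσ h0 hpl hopp
  set h := A.trapHist pl σ v R
  by_cases hstop : ∃ n, A.DeadEnd ((h n).getLastD v)
  · obtain ⟨n, hd⟩ := hstop
    obtain ⟨hw, hf, hR⟩ := hspec n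
    have hlast : ∀ u, (h n).getLast? = some u → u = (h n).getLastD v :=
      fun u hu => Option.some.inj (hu.symm.trans hw.getLast?_eq)
    obtain ⟨u, hu, hwin⟩ := hfin (h n) ⟨hw, fun u hu => hlast u hu ▸ hd⟩ hf
    exact hdead _ hR hd (hlast u hu ▸ hwin)
  simp only [not_exists] at hstop
  set f : ℕ → P := fun n => (h n).getLastD v
  have hgrow : ∀ n, h (n + 1) = h n ++ [f (n + 1)] := by
    intro n
    obtain ⟨x, hx⟩ : ∃ x, h (n + 1) = h n ++ [x] := by
      simp only [h, trapHist, if_neg (hstop n)]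
      exact ⟨_, rfl⟩
    simp [f, hx]
  have hofFn : ∀ n, h n = List.ofFn fun i : Fin (n + 1) => f i := by
    intro n
    induction n with
    | zero => rfl
    | succ n ih => rw [hgrow, ih, List.ofFn_succ_last (n := n + 1)]; rfl
  refine hinf f ⟨rfl, fun n => ?_⟩ fun n ht => ?_
  · have hw := (hspec (n + 1)).1
    rw [hgrow] at hw
    exact (hw.of_snoc (hspec n).1.ne_nil).2
  · have hf := (hspec (n + 1)).2.1
    rw [hgrow] at hf
    rw [← hofFn]
    exact hf (h n) _ _ (List.prefix_refl _) (hspec n).1.getLast?_eq ht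

end Trap

end GameArena

/-! ## Approximants as values of the bounded game -/

/-- `pl.verifies b` holds when `pl` is the verifier at positions of polarity `b`. -/
def Player.verifies : Player → Bool → Bool
  | .eloise, b => b
  | .abelard, b => !b

section Approximants

variable {V : Vocab}

@[simp] lemma approx_bot (n e b) : approx n e b (.bot : SCLFormula V) = .bot := by cases n <;> rfl
@[simp] lemma approx_eq (n e b x y) : approx n e b (.eq x y : SCLFormula V) = .eq x y := by
  cases n <;> rfl
@[simp] lemma approx_rel (n e b R a) : approx n e b (.rel R a : SCLFormula V) = .rel R a := by
  cases n <;> rfl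
@[simp] lemma approx_not (n e b) (φ : SCLFormula V) :
    approx n e b (.not φ) = .not (approx n e (!b) φ) := by cases n <;> rfl
@[simp] lemma approx_and (n e b) (φ ψ : SCLFormula V) :
    approx n e b (.and φ ψ) = .and (approx n e b φ) (approx n e b ψ) := by cases n <;> rfl
@[simp] lemma approx_or (n e b) (φ ψ : SCLFormula V) :
    approx n e b (.or φ ψ) = .or (approx n e b φ) (approx n e b ψ) := by cases n <;> rfl
@[simp] lemma approx_ex (n e b x) (φ : SCLFormula V) :
    approx n e b (.ex x φ) = .ex x (approx n e b φ) := by cases n <;> rfl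
@[simp] lemma approx_all (n e b x) (φ : SCLFormula V) :
    approx n e b (.all x φ) = .all x (approx n e b φ) := by cases n <;> rfl
@[simp] lemma approx_lab (n e b L) (φ : SCLFormula V) :
    approx n e b (.lab L φ) = approx n (Function.update e L (some (.lab L φ))) b φ := by
  cases n <;> rfl

def claimDefault (b : Bool) : SCLFormula V := if b then .bot else .not .bot

lemma isFO_claimDefault (b : Bool) : (claimDefault b : SCLFormula V).IsFO := by
  cases b <;> trivial

lemma approx_zero_claim (e b L) : approx 0 e b (.claim L : SCLFormula V) = claimDefault b := rfl

lemma approx_claim_of_eq_none (n e b L) (h : e L = none) :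
    approx n e b (.claim L : SCLFormula V) = claimDefault b := by
  cases n <;> simp [approx, approxCore, h, claimDefault]

lemma approx_succ_claim_of_eq_some (n e b L) (χ : SCLFormula V) (h : e L = some χ) :
    approx (n + 1) e b (.claim L) = approx n e b χ := by
  simp [approx, approxCore, h]

lemma isFO_approx (n : ℕ) (e) (b : Bool) (ψ : SCLFormula V) : (approx n e b ψ).IsFO := by
  induction n generalizing e b ψ with
  | zero =>
    induction ψ generalizing e b <;>
      simp [SCLFormula.IsFO, approx_zero_claim, isFO_claimDefault, *]
  | succ n ihn =>
    induction ψ generalizing e b with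
    | claim L =>
      cases h : e L with
      | none => rw [approx_claim_of_eq_none _ _ _ _ h]; exact isFO_claimDefault b
      | some χ => rw [approx_succ_claim_of_eq_some _ _ _ _ _ h]; exact ihn ..
    | _ => simp [SCLFormula.IsFO, *]

/-- One more unfolding can only help the verifier: a spent claim is `⊥` at positive and `⊤` at
negative polarity. -/
lemma foSat_approx_mono_succ {M : Struct.{u} V} (n : ℕ) (e) (s : ℕ → M.Dom) (ψ : SCLFormula V) :
    (FOSat M s (approx n e true ψ) → FOSat M s (approx (n + 1) e true ψ)) ∧
    (FOSat M s (approx (n + 1) e false ψ) → FOSat M s (approx n e false ψ)) := by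
  induction n using Nat.strong_induction_on generalizing e s ψ with | _ n ihn =>
  induction ψ generalizing e s with
  | bot | eq | rel => simp
  | claim L =>
    cases hL : e L with
    | none => simp [approx_claim_of_eq_none _ _ _ _ hL]
    | some χ =>
      cases n with
      | zero => simp [approx_zero_claim, claimDefault, FOSat]
      | succ m => simpa [approx_succ_claim_of_eq_some _ _ _ _ _ hL] using ihn m m.lt_succ_self e s χ
  | not φ ih =>
    simp only [approx_not, FOSat]
    exact ⟨mt (ih e s).2, mt (ih e s).1⟩
  | and φ ψ ih₁ ih₂ =>
    simp only [approx_and, FOSat]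
    exact ⟨And.imp (ih₁ e s).1 (ih₂ e s).1, And.imp (ih₁ e s).2 (ih₂ e s).2⟩
  | or φ ψ ih₁ ih₂ =>
    simp only [approx_or, FOSat]
    exact ⟨Or.imp (ih₁ e s).1 (ih₂ e s).1, Or.imp (ih₁ e s).2 (ih₂ e s).2⟩
  | ex x φ ih =>
    simp only [approx_ex, FOSat]
    exact ⟨Exists.imp fun a => (ih e _).1, Exists.imp fun a => (ih e _).2⟩
  | all x φ ih =>
    simp only [approx_all, FOSat]
    exact ⟨forall_imp fun a => (ih e _).1, forall_imp fun a => (ih e _).2⟩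
  | lab L φ ih => simpa using ih _ s

end Approximants

section BoundedGame

variable {V : Vocab} {M : Struct.{u} V} {φ ψ : SCLFormula V} {e : ℕ → Option (SCLFormula V)}
  {s : ℕ → M.Dom} {b : Bool} {n : ℕ} {y : SCLPos V M.Dom × ℕ}

@[simp] lemma bStep_claim_iff (L : ℕ) : BStep M (⟨.claim L, e, s, b⟩, n) y ↔
    ∃ χ m, e L = some χ ∧ n = m + 1 ∧ y = (⟨χ, e, s, b⟩, m) := by
  constructor
  · rintro ⟨⟩; exact ⟨_, _, ‹_›, rfl, rfl⟩
  · rintro ⟨χ, m, h, rfl, rfl⟩; exact .claimStep _ _ _ _ _ _ h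

@[simp] lemma bStep_not_iff : BStep M (⟨.not φ, e, s, b⟩, n) y ↔ y = (⟨φ, e, s, !b⟩, n) := by
  constructor
  · rintro ⟨⟩; rfl
  · rintro rfl; exact .neg ..

@[simp] lemma bStep_and_iff : BStep M (⟨.and φ ψ, e, s, b⟩, n) y ↔
    y = (⟨φ, e, s, b⟩, n) ∨ y = (⟨ψ, e, s, b⟩, n) := by
  constructor
  · rintro ⟨⟩ <;> simp
  · rintro (rfl | rfl); exacts [.andLeft .., .andRight ..]

@[simp] lemma bStep_or_iff : BStep M (⟨.or φ ψ, e, s, b⟩, n) y ↔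
    y = (⟨φ, e, s, b⟩, n) ∨ y = (⟨ψ, e, s, b⟩, n) := by
  constructor
  · rintro ⟨⟩ <;> simp
  · rintro (rfl | rfl); exacts [.orLeft .., .orRight ..]

@[simp] lemma bStep_ex_iff (x : ℕ) : BStep M (⟨.ex x φ, e, s, b⟩, n) y ↔
    ∃ a, y = (⟨φ, e, Function.update s x a, b⟩, n) := by
  constructor
  · rintro ⟨⟩; exact ⟨_, rfl⟩
  · rintro ⟨a, rfl⟩; exact .exStep ..

@[simp] lemma bStep_all_iff (x : ℕ) : BStep M (⟨.all x φ, e, s, b⟩, n) y ↔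
    ∃ a, y = (⟨φ, e, Function.update s x a, b⟩, n) := by
  constructor
  · rintro ⟨⟩; exact ⟨_, rfl⟩
  · rintro ⟨a, rfl⟩; exact .allStep ..

@[simp] lemma bStep_lab_iff (L : ℕ) : BStep M (⟨.lab L φ, e, s, b⟩, n) y ↔
    y = (⟨φ, Function.update e L (some (.lab L φ)), s, b⟩, n) := by
  constructor
  · rintro ⟨⟩; rfl
  · rintro rfl; exact .labStep ..

lemma BStep.lex_lt {x y : SCLPos V M.Dom × ℕ} (h : BStep M x y) :
    toLex (y.2, sizeOf y.1.form) < toLex (x.2, sizeOf x.1.form) := by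
  cases h with
  | claimStep => exact Prod.Lex.left _ _ (Nat.lt_succ_self _)
  | _ => exact Prod.Lex.right _ (by simp <;> omega)

lemma BStep.snd_le_succ {x y : SCLPos V M.Dom × ℕ} (h : BStep M x y) : x.2 ≤ y.2 + 1 := by
  cases h <;> simp

lemma BStep.uStep {x y : SCLPos V M.Dom × ℕ} (h : BStep M x y) : UStep M x.1 y.1 := by
  cases h <;> constructor
  assumption

lemma UStep.exists_bStep {p q : SCLPos V M.Dom} (h : UStep M p q) (n : ℕ)
    (hn : ¬ (gameB M).DeadEnd (p, n)) : ∃ m, BStep M (p, n) (q, m) := by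
  cases h with
  | claimStep L e s b χ hL =>
    cases n with
    | zero => exact absurd (fun y hy => by cases hy) hn
    | succ m => exact ⟨m, .claimStep L e s b χ m hL⟩
  | _ => exact ⟨n, by constructor⟩

lemma UStep.exists_bStep_succ {p q : SCLPos V M.Dom} (h : UStep M p q) (n : ℕ) :
    ∃ m, BStep M (p, n + 1) (q, m) := by
  cases h with
  | claimStep L e s b χ hL => exact ⟨n, .claimStep L e s b χ n hL⟩
  | _ => exact ⟨n + 1, by constructor⟩

lemma deadEnd_gameB_of_gameU {p : SCLPos V M.Dom} (hp : (gameU M).DeadEnd p) (n : ℕ) :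
    (gameB M).DeadEnd (p, n) :=
  fun y hy => hp y.1 hy.uStep

lemma deadEnd_gameU_of_posWin {p : SCLPos V M.Dom} {pl : Player} (h : posWin M p pl) :
    (gameU M).DeadEnd p := by
  intro q hq
  cases pl <;> cases hq <;> exact h.1

/-- `pl` wins the bounded game from `(p, n)`, read off the `n`-th approximant at `p` taken in the
polarity in which `pl` is the verifier. -/
def BoundedWin (M : Struct.{u} V) (pl : Player) (x : SCLPos V M.Dom × ℕ) : Prop :=
  FOSat M x.1.asg (approx x.2 x.1.env (pl.verifies x.1.pol) x.1.form) ↔ pl.verifies x.1.pol = true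

variable {pl : Player}

lemma boundedWin_iff_posWin_of_deadEnd (pl : Player) {x : SCLPos V M.Dom × ℕ}
    (hx : (gameB M).DeadEnd x) : BoundedWin M pl x ↔ posWin M x.1 pl := by
  obtain ⟨⟨ψ, e, s, b⟩, n⟩ := x
  cases ψ with
  | claim L =>
    have hdefault : ∀ c, approx n e c (.claim L) = claimDefault c := by
      intro c
      cases n with
      | zero => rfl
      | succ m =>
        cases hL : e L with
        | none => exact approx_claim_of_eq_none _ _ _ _ hL
        | some χ => exact absurd (hx _ (.claimStep L e s b χ m hL)) id
    cases pl <;> cases b <;>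
      simp [BoundedWin, Player.verifies, posWin, hdefault, claimDefault, FOSat,
        SCLFormula.IsFOAtom]
  | not => exact absurd (hx _ (.neg ..)) id
  | and => exact absurd (hx _ (.andLeft ..)) id
  | or => exact absurd (hx _ (.orLeft ..)) id
  | ex x φ => exact absurd (hx _ (.exStep x φ e s b n (Classical.arbitrary _))) id
  | all x φ => exact absurd (hx _ (.allStep x φ e s b n (Classical.arbitrary _))) id
  | lab => exact absurd (hx _ (.labStep ..)) id
  | _ =>
    cases pl <;> cases b <;>
      simp [BoundedWin, Player.verifies, posWin, FOSat, atomSat, SCLFormula.IsFOAtom]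

lemma boundedWin_iff (pl : Player) {x : SCLPos V M.Dom × ℕ} (hx : ¬ (gameB M).DeadEnd x) :
    BoundedWin M pl x ↔ if posTurn x.1 = pl then ∃ y, BStep M x y ∧ BoundedWin M pl y
      else ∀ y, BStep M x y → BoundedWin M pl y := by
  obtain ⟨⟨ψ, e, s, b⟩, n⟩ := x
  cases ψ with
  | claim L =>
    obtain ⟨χ, m, hL, rfl⟩ : ∃ χ m, e L = some χ ∧ n = m + 1 := by
      by_contra h
      exact hx fun y hy => h (by cases hy; exact ⟨_, _, ‹_›, rfl⟩)
    cases pl <;> simp [BoundedWin, posTurn, approx_succ_claim_of_eq_some _ _ _ _ _ hL, hL]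
  | bot | eq | rel => exact absurd (fun y hy => by cases hy) hx
  | _ => cases pl <;> cases b <;> simp [BoundedWin, Player.verifies, posTurn, FOSat] <;> tauto

lemma boundedWin_iff_exists {x : SCLPos V M.Dom × ℕ} (ht : posTurn x.1 = pl)
    (hx : ¬ (gameB M).DeadEnd x) : BoundedWin M pl x ↔ ∃ y, BStep M x y ∧ BoundedWin M pl y := by
  rw [boundedWin_iff pl hx, if_pos ht]

lemma boundedWin_iff_forall {x : SCLPos V M.Dom × ℕ} (ht : posTurn x.1 ≠ pl)
    (hx : ¬ (gameB M).DeadEnd x) : BoundedWin M pl x ↔ ∀ y, BStep M x y → BoundedWin M pl y := by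
  rw [boundedWin_iff pl hx, if_neg ht]

lemma not_deadEnd_gameB_of_boundedWin {p : SCLPos V M.Dom} (h : BoundedWin M pl (p, n))
    (hp : ¬ (gameU M).DeadEnd p) : ¬ (gameB M).DeadEnd (p, n) :=
  fun hd => hp (deadEnd_gameU_of_posWin ((boundedWin_iff_posWin_of_deadEnd pl hd).1 h))

lemma BoundedWin.mono {p : SCLPos V M.Dom} {m : ℕ} (h : BoundedWin M pl (p, n)) (hnm : n ≤ m) :
    BoundedWin M pl (p, m) := by
  induction m, hnm using Nat.le_induction with
  | base => exact h
  | succ m _ ih =>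
    revert ih
    unfold BoundedWin
    cases pl.verifies p.pol
    · simpa using mt (foSat_approx_mono_succ m p.env p.asg p.form).2
    · simpa using (foSat_approx_mono_succ m p.env p.asg p.form).1

def boundedWinFormula (pl : Player) (n : ℕ) (e : ℕ → Option (SCLFormula V)) (b : Bool)
    (ψ : SCLFormula V) : SCLFormula V :=
  if pl.verifies b then approx n e true ψ else .not (approx n e false ψ)

lemma isFO_boundedWinFormula (pl : Player) (n : ℕ) (e) (b : Bool) (ψ : SCLFormula V) :
    (boundedWinFormula pl n e b ψ).IsFO := by
  unfold boundedWinFormula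
  split
  · exact isFO_approx ..
  · exact isFO_approx (V := V) ..

lemma boundedWin_iff_foSat (pl : Player) (x : SCLPos V M.Dom × ℕ) :
    BoundedWin M pl x ↔ FOSat M x.1.asg (boundedWinFormula pl x.2 x.1.env x.1.pol x.1.form) := by
  unfold BoundedWin boundedWinFormula
  cases pl.verifies x.1.pol <;> simp [FOSat]

end BoundedGame

/-! ## The unbounded game and the game `G_ω` -/

section UnboundedGame

variable {V : Vocab} {M : Struct.{u} V} {pl : Player}

/-- Along a winning play the least winning clock value never increases, and it decreases at
every jump; the other moves shrink the formula. -/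
noncomputable def uRank (M : Struct.{u} V) (pl : Player) (p : SCLPos V M.Dom) : ℕ ×ₗ ℕ :=
  toLex (sInf {n | BoundedWin M pl (p, n)}, sizeOf p.form)

lemma uRank_lt {p q : SCLPos V M.Dom} {m : ℕ} (hq : BoundedWin M pl (q, m))
    (h : BStep M (p, sInf {n | BoundedWin M pl (p, n)}) (q, m)) : uRank M pl q < uRank M pl p :=
  have hmin : sInf {n | BoundedWin M pl (q, n)} ≤ m := Nat.sInf_le hq
  h.lex_lt.trans_le' (Prod.Lex.toLex_le_toLex.2 (hmin.lt_or_eq.imp_right (⟨·, le_rfl⟩)))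

theorem hasWinningStrategy_gameU {p : SCLPos V M.Dom} {n : ℕ} (h : BoundedWin M pl (p, n)) :
    (gameU M).HasWinningStrategy pl p := by
  refine GameArena.hasWinningStrategy_of_region (W := fun q => ∃ m, BoundedWin M pl (q, m))
    (ρ := uRank M pl) ⟨n, h⟩ ?_ ?_ ?_
  · rintro q ⟨m, hm⟩ hd
    exact (boundedWin_iff_posWin_of_deadEnd pl (deadEnd_gameB_of_gameU hd m)).1 hm
  · rintro q hq ht hd
    have hmin := Nat.sInf_mem hq
    obtain ⟨⟨r, m⟩, hr, hrm⟩ :=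
      (boundedWin_iff_exists (x := (q, _)) ht (not_deadEnd_gameB_of_boundedWin hmin hd)).1 hmin
    exact ⟨r, hr.uStep, ⟨m, hrm⟩, uRank_lt hrm hr⟩
  · rintro q hq ht r hr
    have hmin := Nat.sInf_mem hq
    obtain ⟨m, hqr⟩ :=
      hr.exists_bStep _ (not_deadEnd_gameB_of_boundedWin hmin fun hd => hd r hr)
    have hrm := (boundedWin_iff_forall (x := (q, _)) ht (fun hd => hd _ hqr)).1 hmin _ hqr
    exact ⟨⟨m, hrm⟩, uRank_lt hrm hqr⟩

/-- `ℵ₁`-saturation for types in one variable `x` whose parameters come from an assignment `s`. -/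
def CountablySaturated (M : Struct.{u} V) : Prop :=
  ∀ (θ : ℕ → SCLFormula V) (s : ℕ → M.Dom) (x : ℕ), (∀ n, (θ n).IsFO) →
    (∀ n, ∃ a, ∀ k ≤ n, FOSat M (Function.update s x a) (θ k)) →
    ∃ a, ∀ n, FOSat M (Function.update s x a) (θ n)

lemma CountablySaturated.exists_forall_not_boundedWin (hM : CountablySaturated M)
    {φ : SCLFormula V} {e : ℕ → Option (SCLFormula V)} {s : ℕ → M.Dom} {b : Bool} {x : ℕ}
    (h : ∀ n, ∃ a, ¬ BoundedWin M pl (⟨φ, e, Function.update s x a, b⟩, n)) :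
    ∃ a, ∀ n, ¬ BoundedWin M pl (⟨φ, e, Function.update s x a, b⟩, n) := by
  have hθ : ∀ a n, ¬ BoundedWin M pl (⟨φ, e, Function.update s x a, b⟩, n) ↔
      FOSat M (Function.update s x a) (.not (boundedWinFormula pl n e b φ)) :=
    fun a n => (boundedWin_iff_foSat pl _).not
  have hfin : ∀ n, ∃ a, ∀ k ≤ n,
      FOSat M (Function.update s x a) (.not (boundedWinFormula pl k e b φ)) := fun n => by
    obtain ⟨a, ha⟩ := h n
    exact ⟨a, fun k hk => (hθ a k).1 fun hw => ha (hw.mono hk)⟩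
  obtain ⟨a, ha⟩ := hM (fun n => .not (boundedWinFormula pl n e b φ)) s x
    (fun n => isFO_boundedWinFormula pl n e b φ) hfin
  exact ⟨a, fun n => (hθ a n).2 (ha n)⟩

lemma finite_setOf_uStep {p : SCLPos V M.Dom} (hex : ∀ x φ, p.form ≠ .ex x φ)
    (hall : ∀ x φ, p.form ≠ .all x φ) : {q | UStep M p q}.Finite := by
  obtain ⟨ψ, e, s, b⟩ := p
  cases ψ with
  | ex x φ => exact absurd rfl (hex x φ)
  | all x φ => exact absurd rfl (hall x φ)
  | and φ ψ | or φ ψ =>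
    exact (Set.toFinite {⟨φ, e, s, b⟩, ⟨ψ, e, s, b⟩}).subset fun q hq => by cases hq <;> simp
  | claim L =>
    refine Set.Subsingleton.finite fun q hq r hr => ?_
    cases hq with | claimStep _ _ _ _ χ hχ => cases hr with | claimStep _ _ _ _ χ' hχ' =>
    rw [Option.some.inj (hχ.symm.trans hχ')]
  | _ => exact Set.Subsingleton.finite fun q hq r hr => by cases hq <;> cases hr <;> rfl

/-- Finitely many successors are handled by pigeonhole, the quantifier moves by saturation. -/
lemma exists_uStep_forall_not_boundedWin (hM : CountablySaturated M) {p : SCLPos V M.Dom}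
    (ht : posTurn p ≠ pl) (hp : ¬ (gameU M).DeadEnd p) (h : ∀ n, ¬ BoundedWin M pl (p, n)) :
    ∃ q, UStep M p q ∧ ∀ n, ¬ BoundedWin M pl (q, n) := by
  have key : ∀ n, ∃ q, UStep M p q ∧ ¬ BoundedWin M pl (q, n) := by
    intro n
    obtain ⟨q, hq⟩ := not_forall_not.1 hp
    obtain ⟨m, hqm⟩ := hq.exists_bStep_succ n
    have hnd : ¬ (gameB M).DeadEnd (p, n + 1) := fun hd => hd _ hqm
    obtain ⟨⟨r, k⟩, hr, hrk⟩ := not_forall₂.1 (mt (boundedWin_iff_forall ht hnd).2 (h (n + 1)))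
    exact ⟨r, hr.uStep, fun hw => hrk (hw.mono (by simpa using hr.snd_le_succ))⟩
  obtain ⟨ψ, e, s, b⟩ := p
  cases ψ with
  | ex x φ =>
    obtain ⟨a, ha⟩ := hM.exists_forall_not_boundedWin fun n => by
      obtain ⟨q, hq, hn⟩ := key n
      cases hq
      exact ⟨_, hn⟩
    exact ⟨_, .exStep .., ha⟩
  | all x φ =>
    obtain ⟨a, ha⟩ := hM.exists_forall_not_boundedWin fun n => by
      obtain ⟨q, hq, hn⟩ := key n
      cases hq
      exact ⟨_, hn⟩
    exact ⟨_, .allStep .., ha⟩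
  | _ =>
    exact (finite_setOf_uStep (by simp) (by simp)).exists_forall_of_antitone
      (fun q n m hnm hm hn => hm (hn.mono hnm)) key

theorem not_hasWinningStrategy_gameU (hM : CountablySaturated M) {p : SCLPos V M.Dom}
    (h : ∀ n, ¬ BoundedWin M pl (p, n)) : ¬ (gameU M).HasWinningStrategy pl p := by
  refine GameArena.not_hasWinningStrategy_of_trap (R := fun q => ∀ n, ¬ BoundedWin M pl (q, n))
    h ?_ ?_ ?_
  · exact fun q hq hd hwin =>
      hq 0 ((boundedWin_iff_posWin_of_deadEnd pl (deadEnd_gameB_of_gameU hd 0)).2 hwin)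
  · intro q hq ht r hr m hrm
    obtain ⟨k, hqr⟩ := hr.exists_bStep_succ m
    exact hq (m + 1) ((boundedWin_iff_exists (x := (q, _)) ht fun hd => hd _ hqr).2
      ⟨_, hqr, hrm.mono (by simpa using hqr.snd_le_succ)⟩)
  · exact fun q hq ht hd => exists_uStep_forall_not_boundedWin hM ht hd hq

end UnboundedGame

section OmegaGame

variable {V : Vocab} {M : Struct.{u} V} {pl : Player} {φ : SCLFormula V} {s : ℕ → M.Dom}

noncomputable def oRank {D : Type u} : GOPos V D → ℕ ×ₗ ℕ ×ₗ ℕ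
  | .start => toLex (2, toLex (0, 0))
  | .mid _ => toLex (1, toLex (0, 0))
  | .inner p m => toLex (0, toLex (m, sizeOf p.form))

lemma GOStep.oRank_lt {g g' : GOPos V M.Dom} (h : GOStep M φ s g g') : oRank g' < oRank g := by
  cases h with
  | play p q m k hb => exact Prod.Lex.right _ hb.lex_lt
  | _ => exact Prod.Lex.left _ _ (by decide)

lemma deadEnd_inner_iff {p : SCLPos V M.Dom} {m : ℕ} :
    (gameOmega M φ s).DeadEnd (.inner p m) ↔ (gameB M).DeadEnd (p, m) := by
  refine ⟨fun h y hy => h (.inner y.1 y.2) (.play _ _ _ _ hy), fun h g hg => ?_⟩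
  cases hg with | play _ q _ k hb => exact h (q, k) hb

/-- Abelard, if he is the winner, commits to a clock value `k` that suffices for him. -/
theorem hasWinningStrategy_gameOmega {k : ℕ} (h : BoundedWin M pl (initPos φ s, k)) :
    (gameOmega M φ s).HasWinningStrategy pl .start := by
  refine GameArena.hasWinningStrategy_of_region (ρ := oRank) (W := fun g => match g with
    | .start => True
    | .mid n' => pl = .abelard → k ≤ n'
    | .inner p m => BoundedWin M pl (p, m)) trivial ?_ ?_ ?_
  · rintro (_ | n' | ⟨p, m⟩) hg hd
    · exact absurd (hd _ (.abelardPick 0)) id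
    · exact absurd (hd _ (.eloisePick n' n' le_rfl)) id
    · exact (boundedWin_iff_posWin_of_deadEnd pl (deadEnd_inner_iff.1 hd)).1 hg
  · rintro (_ | n' | ⟨p, m⟩) hg ht hd
    · obtain rfl : pl = .abelard := ht.symm
      exact ⟨.mid k, .abelardPick k, fun _ => le_rfl, Prod.Lex.left _ _ (by decide)⟩
    · obtain rfl : pl = .eloise := ht.symm
      have hstep := GOStep.eloisePick (M := M) (φ := φ) (s := s) n' (max n' k) (le_max_left ..)
      exact ⟨_, hstep, h.mono (le_max_right ..), hstep.oRank_lt⟩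
    · obtain ⟨⟨q, m'⟩, hq, hw⟩ :=
        (boundedWin_iff_exists (x := (p, m)) ht (mt deadEnd_inner_iff.2 hd)).1 hg
      have hstep : GOStep M φ s (.inner p m) (.inner q m') := .play _ _ _ _ hq
      exact ⟨_, hstep, hw, hstep.oRank_lt⟩
  · rintro (_ | n' | ⟨p, m⟩) hg ht g hstep
    · cases hstep
      exact ⟨fun hpl => absurd hpl.symm ht, Prod.Lex.left _ _ (by decide)⟩
    · cases hstep with | eloisePick _ n hn => ?_
      cases pl
      · exact absurd rfl ht
      · exact ⟨h.mono ((hg rfl).trans hn), Prod.Lex.left _ _ (by decide)⟩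
    · cases hstep with | play _ q _ k hb => ?_
      exact ⟨(boundedWin_iff_forall (x := (p, m)) ht fun hd => hd _ hb).1 hg _ hb,
        (GOStep.play (φ := φ) (s := s) _ _ _ _ hb).oRank_lt⟩

theorem not_hasWinningStrategy_gameOmega (h : ∀ n, ¬ BoundedWin M pl (initPos φ s, n)) :
    ¬ (gameOmega M φ s).HasWinningStrategy pl .start := by
  refine GameArena.not_hasWinningStrategy_of_trap (R := fun g => match g with
    | .inner p m => ¬ BoundedWin M pl (p, m)
    | _ => True) trivial ?_ ?_ ?_
  · rintro (_ | _ | ⟨p, m⟩) hg hd hwin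
    · exact hwin
    · exact hwin
    · exact hg ((boundedWin_iff_posWin_of_deadEnd pl (deadEnd_inner_iff.1 hd)).2 hwin)
  · rintro (_ | _ | ⟨p, m⟩) hg ht g hstep
    · cases hstep
      trivial
    · cases hstep
      exact h _
    · cases hstep with | play _ q _ k hb =>
      exact fun hw => hg ((boundedWin_iff_exists (x := (p, m)) ht fun hd => hd _ hb).2 ⟨_, hb, hw⟩)
  · rintro (_ | n' | ⟨p, m⟩) hg ht hd
    · exact ⟨.mid 0, .abelardPick 0, trivial⟩
    · exact ⟨_, .eloisePick n' n' le_rfl, h n'⟩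
    · obtain ⟨⟨q, k⟩, hb, hw⟩ := not_forall₂.1
        (mt (boundedWin_iff_forall (x := (p, m)) ht (mt deadEnd_inner_iff.2 hd)).2 hg)
      exact ⟨.inner q k, .play _ _ _ _ hb, hw⟩

end OmegaGame

/-! ## Ultraproducts and countable saturation -/

section Ultraproduct

open Filter

lemma exists_eventually_iff_eventually_exists {ι : Type*} {β : ι → Type*} [∀ i, Nonempty (β i)]
    {l : Filter ι} {P : ∀ i, β i → Prop} :
    (∃ g : ∀ i, β i, ∀ᶠ i in l, P i (g i)) ↔ ∀ᶠ i in l, ∃ a, P i a := by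
  classical
  refine ⟨fun ⟨g, hg⟩ => hg.mono fun i hi => ⟨g i, hi⟩, fun h => ?_⟩
  refine ⟨fun i => if hi : ∃ a, P i a then hi.choose else Classical.arbitrary _,
    h.mono fun i hi => ?_⟩
  simpa [dif_pos hi] using hi.choose_spec

lemma forall_eventually_iff_eventually_forall {ι : Type*} {β : ι → Type*} [∀ i, Nonempty (β i)]
    {F : Ultrafilter ι} {P : ∀ i, β i → Prop} :
    (∀ g : ∀ i, β i, ∀ᶠ i in (F : Filter ι), P i (g i)) ↔ ∀ᶠ i in (F : Filter ι), ∀ a, P i a := by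
  refine ⟨fun h => ?_, fun h g => h.mono fun i hi => hi (g i)⟩
  by_contra hc
  obtain ⟨g, hg⟩ := exists_eventually_iff_eventually_exists.2
    ((F.eventually_not.2 hc).mono fun i hi => not_forall.1 hi)
  obtain ⟨i, hi⟩ := (hg.and (h g)).exists
  exact hi.1 hi.2

variable {V : Vocab} (Ms : ℕ → Struct.{u} V) (F : Ultrafilter ℕ)

def ultraSetoid : Setoid (∀ i, (Ms i).Dom) where
  r g h := ∀ᶠ i in (F : Filter ℕ), g i = h i
  iseqv := ⟨fun _ => .of_forall fun _ => rfl, fun h => h.mono fun _ => Eq.symm,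
    fun h₁ h₂ => (h₁.and h₂).mono fun _ h => h.1.trans h.2⟩

noncomputable abbrev ultraproduct : Struct.{u} V where
  Dom := Quotient (ultraSetoid Ms F)
  dom_nonempty := ⟨⟦fun _ => Classical.arbitrary _⟧⟩
  interp R f := ∀ᶠ i in (F : Filter ℕ), (Ms i).interp R fun j => (f j).out i

variable {Ms F}

lemma ultraproduct_exists_iff {P : (ultraproduct Ms F).Dom → Prop} : (∃ a, P a) ↔ ∃ g, P ⟦g⟧ :=
  Quotient.mk_surjective.exists

lemma ultraproduct_forall_iff {P : (ultraproduct Ms F).Dom → Prop} : (∀ a, P a) ↔ ∀ g, P ⟦g⟧ :=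
  Quotient.mk_surjective.forall

lemma update_mk (s : ℕ → ∀ i, (Ms i).Dom) (x : ℕ) (g : ∀ i, (Ms i).Dom) :
    Function.update (fun v => (⟦s v⟧ : (ultraproduct Ms F).Dom)) x ⟦g⟧ =
      fun v => ⟦Function.update s x g v⟧ := by
  funext v
  by_cases hv : v = x <;> simp [hv]

theorem foSat_ultraproduct_iff {ψ : SCLFormula V} (hψ : ψ.IsFO) (s : ℕ → ∀ i, (Ms i).Dom) :
    FOSat (ultraproduct Ms F) (fun v => ⟦s v⟧) ψ ↔
      ∀ᶠ i in (F : Filter ℕ), FOSat (Ms i) (fun v => s v i) ψ := by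
  induction ψ generalizing s with
  | bot => simp [FOSat, F.neBot.ne]
  | eq x y => exact Quotient.eq
  | rel R a =>
    have hout : ∀ᶠ i in (F : Filter ℕ),
        (fun j => (⟦s (a j)⟧ : (ultraproduct Ms F).Dom).out i) = fun j => s (a j) i := by
      simpa only [funext_iff] using eventually_all.2 fun j =>
        (Quotient.mk_out (s := ultraSetoid Ms F) (s (a j)) : ∀ᶠ i in (F : Filter ℕ), _)
    refine ⟨fun h => (h.and hout).mono fun i hi => ?_, fun h => (h.and hout).mono fun i hi => ?_⟩
    · simpa only [FOSat, ← hi.2] using hi.1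
    · simpa only [FOSat, ← hi.2] using hi.1
  | claim | lab => exact hψ.elim
  | not φ ih => simp only [FOSat]; rw [ih hψ, F.eventually_not]
  | and φ ψ ih₁ ih₂ => simp only [FOSat]; rw [ih₁ hψ.1, ih₂ hψ.2, eventually_and]
  | or φ ψ ih₁ ih₂ => simp only [FOSat]; rw [ih₁ hψ.1, ih₂ hψ.2, F.eventually_or]
  | ex x φ ih =>
    simp only [FOSat]
    rw [← exists_eventually_iff_eventually_exists, ultraproduct_exists_iff]
    simp only [update_mk, ih hψ, Function.update_apply_family]
  | all x φ ih =>
    simp only [FOSat]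
    rw [← forall_eventually_iff_eventually_forall, ultraproduct_forall_iff]
    simp only [update_mk, ih hψ, Function.update_apply_family]

/-- In the `i`-th factor, realize as many formulas of the type as possible, up to the `i`-th. -/
theorem countablySaturated_ultraproduct (hF : (F : Filter ℕ) ≤ atTop) :
    CountablySaturated (ultraproduct Ms F) := by
  classical
  intro θ s x hθ hfin
  obtain ⟨t, rfl⟩ : ∃ t : ℕ → ∀ i, (Ms i).Dom, s = fun v => ⟦t v⟧ :=
    ⟨fun v => (s v).out, funext fun v => (Quotient.out_eq _).symm⟩
  set Q : ℕ → ℕ → Prop := fun i n =>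
    ∃ a, ∀ k ≤ n, FOSat (Ms i) (Function.update (fun v => t v i) x a) (θ k)
  have hQ : ∀ n, ∀ᶠ i in (F : Filter ℕ), Q i n := by
    intro n
    obtain ⟨a, ha⟩ := hfin n
    induction a using Quotient.inductionOn with | h g => ?_
    have hk : ∀ k ∈ Set.Iic n, ∀ᶠ i in (F : Filter ℕ),
        FOSat (Ms i) (Function.update (fun v => t v i) x (g i)) (θ k) := fun k hk => by
      simpa only [update_mk, foSat_ultraproduct_iff (hθ k), Function.update_apply_family]
        using ha k hk
    exact ((eventually_all_finite (Set.finite_Iic n)).2 hk).mono fun i hi => ⟨g i, hi⟩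
  let g : ∀ i, (Ms i).Dom := fun i =>
    if h : Q i (Nat.findGreatest (Q i) i) then h.choose else Classical.arbitrary _
  refine ⟨⟦g⟧, fun n => ?_⟩
  rw [update_mk, foSat_ultraproduct_iff (hθ n)]
  filter_upwards [hQ n, hF (eventually_ge_atTop n)] with i hQi hi
  have hQN := Nat.findGreatest_spec hi hQi
  simpa only [Function.update_apply_family, g, dif_pos hQN] using
    hQN.choose_spec n (Nat.le_findGreatest hi hQi)

end Ultraproduct

theorem exists_countablySaturated_of_finitelySatisfiable {V : Vocab} (Γ : ℕ → SCLFormula V)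
    (hΓ : ∀ n, (Γ n).IsFO)
    (h : ∀ n, ∃ (M : Struct.{u} V) (s : ℕ → M.Dom), ∀ k ≤ n, FOSat M s (Γ k)) :
    ∃ (M : Struct.{u} V) (s : ℕ → M.Dom), CountablySaturated M ∧ ∀ n, FOSat M s (Γ n) := by
  choose Ms ss hss using h
  let F := Ultrafilter.of (Filter.atTop : Filter ℕ)
  refine ⟨ultraproduct Ms F, fun v => ⟦fun i => ss i v⟧,
    countablySaturated_ultraproduct (Ultrafilter.of_le _), fun n => ?_⟩
  rw [foSat_ultraproduct_iff (hΓ n)]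
  filter_upwards [Ultrafilter.of_le _ (Filter.eventually_ge_atTop n)] with i hi
  exact hss i n hi

lemma boundedWin_initPos_iff {V : Vocab} {M : Struct.{u} V} (pl : Player) (φ : SCLFormula V)
    (s : ℕ → M.Dom) (n : ℕ) :
    BoundedWin M pl (initPos φ s, n) ↔ FOSat M s (boundedWinFormula pl n (fun _ => none) true φ) :=
  boundedWin_iff_foSat pl _

lemma boundedWin_eloise_initPos_iff {V : Vocab} {M : Struct.{u} V} (φ : SCLFormula V)
    (s : ℕ → M.Dom) (n : ℕ) :
    BoundedWin M .eloise (initPos φ s, n) ↔ FOSat M s (approximant φ n) := by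
  simp [BoundedWin, Player.verifies, initPos, approximant]

theorem exists_approximant_iff_of_determined {V : Vocab} (φ : SCLFormula V)
    (W : Player → ∀ M : Struct.{u} V, (ℕ → M.Dom) → Prop)
    (hdet : ∀ M s, W .eloise M s ∨ W .abelard M s)
    (hexcl : ∀ M s, ¬ (W .eloise M s ∧ W .abelard M s))
    (hwin : ∀ pl M s n, BoundedWin M pl (initPos φ s, n) → W pl M s)
    (hlose : ∀ pl M s, CountablySaturated M → (∀ n, ¬ BoundedWin M pl (initPos φ s, n)) →
      ¬ W pl M s) :
    ∃ n, ∀ M s, W .eloise M s ↔ FOSat M s (approximant φ n) := by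
  by_contra! hno
  let Γ : ℕ → SCLFormula V := fun n =>
    .and (.not (boundedWinFormula .eloise n (fun _ => none) true φ))
      (.not (boundedWinFormula .abelard n (fun _ => none) true φ))
  have hΓ : ∀ n, ∃ (M : Struct.{u} V) (s : ℕ → M.Dom), ∀ k ≤ n, FOSat M s (Γ k) := by
    intro n
    obtain ⟨M, s, hMs⟩ := hno n
    rw [← boundedWin_eloise_initPos_iff] at hMs
    obtain ⟨hWE, hE⟩ := hMs.resolve_right fun ⟨hWE, hE⟩ => hWE (hwin _ M s n hE)
    refine ⟨M, s, fun k hk => ⟨fun hb => hE ((boundedWin_initPos_iff ..).2 hb |>.mono hk),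
      fun hb => hexcl M s ⟨hWE, hwin _ M s k ((boundedWin_initPos_iff ..).2 hb)⟩⟩⟩
  obtain ⟨M, s, hM, hs⟩ := exists_countablySaturated_of_finitelySatisfiable Γ
    (fun n => ⟨isFO_boundedWinFormula .., isFO_boundedWinFormula ..⟩) hΓ
  rcases hdet M s with h | h
  · exact hlose .eloise M s hM (fun n hn => (hs n).1 ((boundedWin_initPos_iff ..).1 hn)) h
  · exact hlose .abelard M s hM (fun n hn => (hs n).2 ((boundedWin_initPos_iff ..).1 hn)) h

theorem determined_everywhere_implies_first_order_general {V : Vocab}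
    (φ : SCLFormula V) :
    ((∀ (M : Struct.{u} V) (s : ℕ → M.Dom),
        ((gameU M).HasWinningStrategy .eloise (initPos φ s) ∨
          (gameU M).HasWinningStrategy .abelard (initPos φ s)) ∧
        ¬ ((gameU M).HasWinningStrategy .eloise (initPos φ s) ∧
            (gameU M).HasWinningStrategy .abelard (initPos φ s))) →
      ∃ n : ℕ, (approximant φ n).IsFO ∧
        ∀ (M : Struct.{u} V) (s : ℕ → M.Dom),
          SCLTrue M s φ ↔ FOSat M s (approximant φ n)) ∧
    ((∀ (M : Struct.{u} V) (s : ℕ → M.Dom),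
        ((gameOmega M φ s).HasWinningStrategy .eloise .start ∨
          (gameOmega M φ s).HasWinningStrategy .abelard .start) ∧
        ¬ ((gameOmega M φ s).HasWinningStrategy .eloise .start ∧
            (gameOmega M φ s).HasWinningStrategy .abelard .start)) →
      ∃ n : ℕ, (approximant φ n).IsFO ∧
        ∀ (M : Struct.{u} V) (s : ℕ → M.Dom),
          BndTrue M s φ ↔ FOSat M s (approximant φ n)) := by
  constructor
  · intro hdet
    obtain ⟨n, hn⟩ := exists_approximant_iff_of_determined φ
      (fun pl M s => (gameU M).HasWinningStrategy pl (initPos φ s))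
      (fun M s => (hdet M s).1) (fun M s => (hdet M s).2)
      (fun _ _ _ _ h => hasWinningStrategy_gameU h)
      (fun _ _ _ hM h => not_hasWinningStrategy_gameU hM h)
    exact ⟨n, isFO_approx .., hn⟩
  · intro hdet
    obtain ⟨n, hn⟩ := exists_approximant_iff_of_determined φ
      (fun pl M s => (gameOmega M φ s).HasWinningStrategy pl .start)
      (fun M s => (hdet M s).1) (fun M s => (hdet M s).2)
      (fun _ _ _ _ h => hasWinningStrategy_gameOmega h)
      (fun _ _ _ _ h => not_hasWinningStrategy_gameOmega h)
    exact ⟨n, isFO_approx .., hn⟩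

/-- Suppose the sentence `φ` is determined everywhere: in
every suitable model exactly one of Eloise and Abelard has a winning strategy
in the semantic game for `φ` (under unbounded semantics for SCL, resp. under
bounded semantics for BndSCL).  Then there is some `n ∈ ℕ` such that `φ` is
equivalent to its `n`-th approximant `Φⁿ_φ`; in particular `φ` is equivalent
to a first-order sentence. -/
theorem determined_everywhere_implies_first_order {V : Vocab}
    (φ : SCLFormula V) (hφ : φ.freeVars = ∅) :
    ((∀ (M : Struct.{u} V) (s : ℕ → M.Dom),
        ((gameU M).HasWinningStrategy .eloise (initPos φ s) ∨
          (gameU M).HasWinningStrategy .abelard (initPos φ s)) ∧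
        ¬ ((gameU M).HasWinningStrategy .eloise (initPos φ s) ∧
            (gameU M).HasWinningStrategy .abelard (initPos φ s))) →
      ∃ n : ℕ, (approximant φ n).IsFO ∧
        ∀ (M : Struct.{u} V) (s : ℕ → M.Dom),
          SCLTrue M s φ ↔ FOSat M s (approximant φ n)) ∧
    ((∀ (M : Struct.{u} V) (s : ℕ → M.Dom),
        ((gameOmega M φ s).HasWinningStrategy .eloise .start ∨
          (gameOmega M φ s).HasWinningStrategy .abelard .start) ∧
        ¬ ((gameOmega M φ s).HasWinningStrategy .eloise .start ∧
            (gameOmega M φ s).HasWinningStrategy .abelard .start)) →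
      ∃ n : ℕ, (approximant φ n).IsFO ∧
        ∀ (M : Struct.{u} V) (s : ℕ → M.Dom),
          BndTrue M s φ ↔ FOSat M s (approximant φ n)) :=
  determined_everywhere_implies_first_order_general φ
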